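/- arXiv:1911.08732 — 2 statements merged into one kernel-verified Lean document; each statement's English description precedes it below -/
import Mathlib

section
/- In the 0-Hecke monoid, let x be a letter and w_1, w_2, w_3, w_4 words such that all letters of w_1 and w_3 are greater than x, all letters of w_2 and w_4 are less than x, x+1 does not occur in w_3, and x-1 does not occur in w_2. Then w_1 · w_2 · w_3 · x · w_4 ≡ (w_1 · x · w_2) · (w_3 · w_4) in the 0-Hecke monoid. -/
/-- One elementary relation of the 0-Hecke monoid applied somewhere inside a word
(letters are positive integers; `p + 1 < q ∨ q + 1 < p` encodes `|p - q| > 1`). -/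
inductive HeckeStep : List ℕ → List ℕ → Prop
  | comm (u v : List ℕ) (p q : ℕ) (hpq : p + 1 < q ∨ q + 1 < p) :
      HeckeStep (u ++ p :: q :: v) (u ++ q :: p :: v)
  | braid (u v : List ℕ) (p q : ℕ) :
      HeckeStep (u ++ p :: q :: p :: v) (u ++ q :: p :: q :: v)
  | idem (u v : List ℕ) (p : ℕ) :
      HeckeStep (u ++ p :: p :: v) (u ++ p :: v)

/-- 0-Hecke equivalence of words. -/
def HeckeEquiv : List ℕ → List ℕ → Prop := Relation.EqvGen HeckeStep

/-- A word contains a consecutive braid subword `i (i+1) i` or `(i+1) i (i+1)`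
(the latter is the form `i (i-1) i`). -/
def ContainsBraid (w : List ℕ) : Prop :=
  ∃ (u v : List ℕ) (i : ℕ),
    w = u ++ i :: (i+1) :: i :: v ∨ w = u ++ (i+1) :: i :: (i+1) :: v

/-- A word is fully-commutative if no 0-Hecke equivalent word contains a
consecutive braid subword. -/
def FullyCommutative (w : List ℕ) : Prop :=
  ∀ w', HeckeEquiv w w' → ¬ ContainsBraid w'

theorem HeckeEquiv.refl (u : List ℕ) : HeckeEquiv u u :=
  Relation.EqvGen.refl u

theorem HeckeEquiv.trans {u v w : List ℕ} (huv : HeckeEquiv u v) (hvw : HeckeEquiv v w) :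
    HeckeEquiv u w :=
  Relation.EqvGen.trans _ _ _ huv hvw

theorem heckeEquiv_append_cons_comm (x : ℕ) (w : List ℕ)
    (hw : ∀ a ∈ w, a + 1 < x ∨ x + 1 < a) (u v : List ℕ) :
    HeckeEquiv (u ++ w ++ x :: v) (u ++ x :: (w ++ v)) := by
  induction w generalizing u with
  | nil => simpa using HeckeEquiv.refl (u ++ x :: v)
  | cons a w ih =>
    have hmove : HeckeEquiv (u ++ a :: w ++ x :: v) (u ++ a :: x :: (w ++ v)) := by
      simpa using ih (fun b hb => hw b (List.mem_cons_of_mem _ hb)) (u ++ [a])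
    exact hmove.trans
      (Relation.EqvGen.rel _ _ (HeckeStep.comm u (w ++ v) a x (hw a List.mem_cons_self)))

theorem fStar_case2_heckeEquiv_general (x : ℕ) (w1 w2 w3 w4 : List ℕ)
    (hw3 : ∀ a ∈ w3, x < a)
    (hw2 : ∀ a ∈ w2, a < x)
    (hw3' : x + 1 ∉ w3)
    (hw2' : ∀ a ∈ w2, a + 1 ≠ x) :
    HeckeEquiv
      (w1 ++ w2 ++ w3 ++ [x] ++ w4)
      ((w1 ++ [x] ++ w2) ++ (w3 ++ w4)) := by
  have hfar3 : ∀ a ∈ w3, a + 1 < x ∨ x + 1 < a := fun a ha => by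
    have hne : a ≠ x + 1 := fun h => hw3' (h ▸ ha)
    have := hw3 a ha
    omega
  have hfar2 : ∀ a ∈ w2, a + 1 < x ∨ x + 1 < a := fun a ha => by
    have := hw2 a ha
    have := hw2' a ha
    omega
  have hpast3 := heckeEquiv_append_cons_comm x w3 hfar3 (w1 ++ w2) w4
  have hpast2 := heckeEquiv_append_cons_comm x w2 hfar2 w1 (w3 ++ w4)
  simpa using hpast3.trans (by simpa using hpast2)

/-- Case (2) of the proof that `f_i^⋆` preserves the 0-Hecke equivalence class:
`w₁ w₂ w₃ x w₄ ≡ (w₁ x w₂) (w₃ w₄)`. -/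
theorem fStar_case2_heckeEquiv (x : ℕ) (w1 w2 w3 w4 : List ℕ)
    (hw1 : ∀ a ∈ w1, x < a)
    (hw3 : ∀ a ∈ w3, x < a)
    (hw2 : ∀ a ∈ w2, a < x)
    (hw4 : ∀ a ∈ w4, a < x)
    (hw3' : x + 1 ∉ w3)
    (hw2' : ∀ a ∈ w2, a + 1 ≠ x) :
    HeckeEquiv
      (w1 ++ w2 ++ w3 ++ [x] ++ w4)
      ((w1 ++ [x] ++ w2) ++ (w3 ++ w4)) :=
  fStar_case2_heckeEquiv_general x w1 w2 w3 w4 hw3 hw2 hw3' hw2'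
end

section
/- Let P be a tableau with strictly increasing rows whose transpose is semistandard and whose row reading word is fully-commutative. If x ≥ x' are letters such that row(P)·x·x' is fully-commutative, then the insertion path of (P ← x) ← x' under *-insertion is weakly to the left of that of P ← x, and the new box added by x' is weakly to the left of and strictly above the new box added by x. -/
/-- The smallest entry of `R` that is larger than `x` (junk value `0` if none). -/
def minGT (R : List ℕ) (x : ℕ) : ℕ := ((R.filter (fun y => x < y)).min?).getD 0

/-- The smallest `y ≤ x` such that the whole interval `[y, x]` is contained in `R`. -/
noncomputable def intervalMin (R : List ℕ) (x : ℕ) : ℕ :=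
  sInf {y | y ≤ x ∧ ∀ z, y ≤ z → z ≤ x → z ∈ R}

/-- `⋆`-insertion of a letter `x` into a single row `R`: returns the new row and
the letter (if any) bumped into the next row.  Case 1: if `R` is empty or
`x > max R`, append `x`.  Case 3: if `x ∈ R`, leave `R` unchanged and bump the
smallest `y` with `[y,x] ⊆ R`.  Case 2: otherwise replace the smallest `y > x`
by `x` and bump `y`. -/
noncomputable def insertRow (R : List ℕ) (x : ℕ) : List ℕ × Option ℕ :=
  if ∀ y ∈ R, y < x then (R ++ [x], none)
  else if x ∈ R then (R, some (intervalMin R x))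
  else (R.map (fun y => if y = minGT R x then x else y), some (minGT R x))

/-- `⋆`-insertion of a letter into a tableau, whose rows are listed bottom row
first (French notation). -/
noncomputable def insertTab : List (List ℕ) → ℕ → List (List ℕ)
  | [], x => [[x]]
  | R :: rest, x =>
    match (insertRow R x).2 with
    | none => (insertRow R x).1 :: rest
    | some y => (insertRow R x).1 :: insertTab rest y

/-- The row reading word: rows are read from the top row down (French notation),
each row from left to right. -/
def rowWord (T : List (List ℕ)) : List ℕ := T.reverse.flatten

/-- `T` (rows listed bottom row first) is a tableau with strictly increasing rows
whose transpose is semistandard: rows are nonempty with weakly decreasing lengths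
going up, rows strictly increase, and columns weakly increase going up. -/
def TransposeSSYT (T : List (List ℕ)) : Prop :=
  (∀ R ∈ T, R ≠ []) ∧
  List.Chain' (fun a b => b ≤ a) (T.map List.length) ∧
  (∀ R ∈ T, List.Chain' (· < ·) R) ∧
  (∀ r c, r + 1 < T.length → c < (T.getD (r+1) []).length →
    (T.getD r []).getD c 0 ≤ (T.getD (r+1) []).getD c 0)

/-- `T` (rows listed bottom row first) is a semistandard Young tableau: rows are
nonempty with weakly decreasing lengths going up, rows weakly increase, and
columns strictly increase going up. -/
def IsSSYT (T : List (List ℕ)) : Prop :=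
  (∀ R ∈ T, R ≠ []) ∧
  List.Chain' (fun a b => b ≤ a) (T.map List.length) ∧
  (∀ R ∈ T, List.Chain' (· ≤ ·) R) ∧
  (∀ r c, r + 1 < T.length → c < (T.getD (r+1) []).length →
    (T.getD r []).getD c 0 < (T.getD (r+1) []).getD c 0)

/-- The insertion path of the `⋆`-insertion of `x` into the tableau, as a list of
cells `(row, column)` (both 0-indexed, rows from the bottom, starting at row `r`):
in Case 1 the newly appended cell, in Case 2 the cell of the bumped letter, in
Case 3 the cell containing the letter equal to the inserted one. -/
noncomputable def insertPath : List (List ℕ) → ℕ → ℕ → List (ℕ × ℕ)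
  | [], _, r => [(r, 0)]
  | R :: rest, x, r =>
    if ∀ y ∈ R, y < x then [(r, R.length)]
    else if x ∈ R then (r, R.idxOf x) :: insertPath rest (intervalMin R x) (r+1)
    else (r, R.idxOf (minGT R x)) :: insertPath rest (minGT R x) (r+1)

/-- The new box created by the `⋆`-insertion of `x` into `T`. -/
noncomputable def newBox (T : List (List ℕ)) (x : ℕ) : ℕ × ℕ :=
  (insertPath T x 0).getLastD (0, 0)

lemma minGT_spec {R : List ℕ} {x : ℕ} (hx : ¬ ∀ y ∈ R, y < x) (hxR : x ∉ R) :
    minGT R x ∈ R ∧ x < minGT R x ∧ ∀ z ∈ R, x < z → minGT R x ≤ z := by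
  push Not at hx
  obtain ⟨y, hyR, hxy⟩ := hx
  have hy : y ∈ R.filter (x < ·) := by
    simpa [hyR] using lt_of_le_of_ne hxy (by rintro rfl; exact hxR hyR)
  obtain ⟨m, hm⟩ := Option.isSome_iff_exists.mp (List.isSome_min?_of_mem hy)
  obtain ⟨hmR, hmin⟩ := List.min?_eq_some_iff.mp hm
  have hminGT : minGT R x = m := by simp [minGT, hm]
  simp only [List.mem_filter, decide_eq_true_eq] at hmR hmin
  exact hminGT ▸ ⟨hmR.1, hmR.2, fun z hz hxz => hmin z ⟨hz, hxz⟩⟩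

lemma intervalMin_spec {R : List ℕ} {x : ℕ} (hx : x ∈ R) :
    intervalMin R x ≤ x ∧ ∀ z, intervalMin R x ≤ z → z ≤ x → z ∈ R :=
  Nat.sInf_mem (s := {y | y ≤ x ∧ ∀ z, y ≤ z → z ≤ x → z ∈ R})
    ⟨x, le_rfl, fun _ h₁ h₂ => le_antisymm h₂ h₁ ▸ hx⟩

lemma intervalMin_mono {R : List ℕ} {x x' : ℕ} (hx : x ∈ R) (hx' : x' ∈ R) (h : x' ≤ x) :
    intervalMin R x' ≤ intervalMin R x := by
  obtain ⟨-, hint⟩ := intervalMin_spec hx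
  by_cases hc : intervalMin R x ≤ x'
  · exact Nat.sInf_le ⟨hc, fun z hz₁ hz₂ => hint z hz₁ (hz₂.trans h)⟩
  · exact (intervalMin_spec hx').1.trans (not_le.mp hc).le

lemma minGT_le_intervalMin {R : List ℕ} {x x' : ℕ} (hx : x ∈ R) (hx' : x' ∉ R) (h : x' ≤ x) :
    minGT R x' ≤ intervalMin R x := by
  obtain ⟨hle, hint⟩ := intervalMin_spec hx
  have hlt : x' < intervalMin R x := not_le.mp fun hc => hx' (hint x' hc h)
  exact (minGT_spec (fun hall => (hall x hx).not_ge h) hx').2.2 _ (hint _ le_rfl hle) hlt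

lemma idxOf_le_idxOf_of_pairwise {R : List ℕ} (hR : R.Pairwise (· < ·)) {a b : ℕ}
    (ha : a ∈ R) (hb : b ∈ R) (hab : a ≤ b) : R.idxOf a ≤ R.idxOf b := by
  by_contra! hlt
  have := List.pairwise_iff_getElem.mp hR _ _ (List.idxOf_lt_length_iff.mpr hb)
    (List.idxOf_lt_length_iff.mpr ha) hlt
  rw [List.getElem_idxOf, List.getElem_idxOf] at this
  omega

section Replace

variable {R : List ℕ} {x m : ℕ}

lemma pairwise_map_replace (hR : R.Pairwise (· < ·)) (hxR : x ∉ R) (hxm : x < m)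
    (hmin : ∀ z ∈ R, x < z → m ≤ z) :
    (R.map fun y => if y = m then x else y).Pairwise (· < ·) := by
  rw [List.pairwise_map]
  refine hR.imp_of_mem fun {a b} haR hbR hab => ?_
  have hxa : x ≠ a := fun h => hxR (h ▸ haR)
  have ha : a = m → b ≠ m := by omega
  have hb : b = m → ¬ x < a := fun hbm hxa' => by have := hmin a haR hxa'; omega
  split_ifs <;> omega

lemma idxOf_map_replace (hxR : x ∉ R) (hm : m ∈ R) :
    (R.map fun y => if y = m then x else y).idxOf x = R.idxOf m := by
  induction R with
  | nil => simp at hm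
  | cons h t ih =>
    by_cases hhm : h = m
    · subst hhm
      simp
    · have hxh : h ≠ x := fun h' => hxR (h' ▸ List.mem_cons_self)
      rw [List.map_cons, if_neg hhm, List.idxOf_cons_ne _ hxh, List.idxOf_cons_ne _ hhm,
        ih (fun h' => hxR (List.mem_cons_of_mem _ h')) ((List.mem_cons.mp hm).resolve_left
          (Ne.symm hhm))]

end Replace

/-- The column that `insertPath` records in row `R`. -/
def insertCol (R : List ℕ) (x : ℕ) : ℕ :=
  if ∀ y ∈ R, y < x then R.length else if x ∈ R then R.idxOf x else R.idxOf (minGT R x)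

section InsertRow

variable {R : List ℕ} {x : ℕ}

lemma insertRow_snd_eq_none_iff : (insertRow R x).2 = none ↔ ∀ y ∈ R, y < x := by
  unfold insertRow
  split_ifs <;> simp_all

lemma insertCol_of_insertRow_snd_eq_none (h : (insertRow R x).2 = none) :
    insertCol R x = R.length :=
  if_pos (insertRow_snd_eq_none_iff.mp h)

lemma mem_insertRow_fst : x ∈ (insertRow R x).1 := by
  unfold insertRow
  split_ifs with h₁ h₂
  · simp
  · exact h₂
  · exact List.mem_map.mpr ⟨_, (minGT_spec h₁ h₂).1, if_pos rfl⟩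

lemma pairwise_insertRow_fst (hR : R.Pairwise (· < ·)) :
    (insertRow R x).1.Pairwise (· < ·) := by
  unfold insertRow
  split_ifs with h₁ h₂
  · simpa [List.pairwise_append, hR] using h₁
  · exact hR
  · obtain ⟨-, hxm, hmin⟩ := minGT_spec h₁ h₂
    exact pairwise_map_replace hR h₂ hxm hmin

lemma insertCol_eq_idxOf_insertRow_fst : insertCol R x = (insertRow R x).1.idxOf x := by
  unfold insertCol insertRow
  split_ifs with h₁ h₂
  · have hxR : x ∉ R := fun h => (h₁ x h).false
    simp [List.idxOf_append, hxR]
  · rfl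
  · exact (idxOf_map_replace h₂ (minGT_spec h₁ h₂).1).symm

lemma insertCol_le_idxOf (hR : R.Pairwise (· < ·)) {a a' : ℕ} (ha : a ∈ R) (haa : a' ≤ a) :
    insertCol R a' ≤ R.idxOf a := by
  have h₁ : ¬ ∀ y ∈ R, y < a' := fun h => (h a ha).not_ge haa
  unfold insertCol
  split_ifs with h₂
  · exact idxOf_le_idxOf_of_pairwise hR h₂ ha haa
  · have hlt : a' < a := lt_of_le_of_ne haa fun h => h₂ (h ▸ ha)
    obtain ⟨hmR, -, hmin⟩ := minGT_spec h₁ h₂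
    exact idxOf_le_idxOf_of_pairwise hR hmR ha (hmin a ha hlt)

lemma insertRow_snd_le_intervalMin {a a' y' : ℕ} (ha : a ∈ R) (haa : a' ≤ a)
    (hy' : (insertRow R a').2 = some y') : y' ≤ intervalMin R a := by
  have h₁ : ¬ ∀ y ∈ R, y < a' := fun h => (h a ha).not_ge haa
  unfold insertRow at hy'
  split_ifs at hy' with h₂ <;> cases hy'
  · exact intervalMin_mono ha h₂ haa
  · exact minGT_le_intervalMin ha h₂ haa

lemma intervalMin_insertRow_fst_le {y : ℕ} (hy : (insertRow R x).2 = some y) :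
    intervalMin (insertRow R x).1 x ≤ y := by
  unfold insertRow at hy ⊢
  split_ifs at hy ⊢ with h₁ h₂ <;> cases hy
  · exact le_rfl
  · obtain ⟨hmR, hxm, -⟩ := minGT_spec h₁ h₂
    have hx : x ∈ R.map fun y => if y = minGT R x then x else y :=
      List.mem_map.mpr ⟨_, hmR, if_pos rfl⟩
    exact (intervalMin_spec hx).1.trans hxm.le

end InsertRow

section InsertTwice

variable {R : List ℕ} {a a' : ℕ}

lemma insertCol_insertRow_fst_le (hR : R.Pairwise (· < ·)) (haa : a' ≤ a) :
    insertCol (insertRow R a).1 a' ≤ insertCol R a :=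
  insertCol_eq_idxOf_insertRow_fst (R := R) ▸
    insertCol_le_idxOf (pairwise_insertRow_fst hR) mem_insertRow_fst haa

lemma exists_insertRow_insertRow_snd_eq_some (haa : a' ≤ a) :
    ∃ y', (insertRow (insertRow R a).1 a').2 = some y' := by
  refine Option.ne_none_iff_exists'.mp fun h => ?_
  exact ((insertRow_snd_eq_none_iff.mp h) a mem_insertRow_fst).not_ge haa

lemma insertRow_insertRow_snd_le {y y' : ℕ} (haa : a' ≤ a) (hy : (insertRow R a).2 = some y)
    (hy' : (insertRow (insertRow R a).1 a').2 = some y') : y' ≤ y :=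
  (insertRow_snd_le_intervalMin mem_insertRow_fst haa hy').trans
    (intervalMin_insertRow_fst_le hy)

end InsertTwice

section InsertPath

variable {R : List ℕ} {rest : List (List ℕ)} {x y r : ℕ}

lemma insertTab_cons_of_none (h : (insertRow R x).2 = none) :
    insertTab (R :: rest) x = (insertRow R x).1 :: rest := by
  rw [insertTab, h]

lemma insertTab_cons_of_some (h : (insertRow R x).2 = some y) :
    insertTab (R :: rest) x = (insertRow R x).1 :: insertTab rest y := by
  rw [insertTab, h]

lemma insertPath_cons_of_none (h : (insertRow R x).2 = none) :
    insertPath (R :: rest) x r = [(r, insertCol R x)] := by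
  rw [insertPath, if_pos (insertRow_snd_eq_none_iff.mp h), insertCol_of_insertRow_snd_eq_none h]

lemma insertPath_cons_of_some (h : (insertRow R x).2 = some y) :
    insertPath (R :: rest) x r = (r, insertCol R x) :: insertPath rest y (r + 1) := by
  unfold insertRow at h
  rw [insertPath, insertCol]
  split_ifs at h ⊢ <;> cases h <;> rfl

lemma insertPath_ne_nil (T : List (List ℕ)) (x r : ℕ) : insertPath T x r ≠ [] := by
  cases T with
  | nil => simp [insertPath]
  | cons R rest =>
    rw [insertPath]
    split_ifs <;> simp

lemma le_fst_of_mem_insertPath {T : List (List ℕ)} {p : ℕ × ℕ} (hp : p ∈ insertPath T x r) :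
    r ≤ p.1 := by
  induction T generalizing x r with
  | nil => simp_all [insertPath]
  | cons R rest ih =>
    rw [insertPath] at hp
    split_ifs at hp
    · simp_all
    all_goals
      rcases List.mem_cons.mp hp with rfl | hp
      · rfl
      · exact (Nat.le_succ r).trans (ih hp)

lemma snd_le_of_mem_insertPath {T : List (List ℕ)} {L : ℕ} (hL : ∀ S ∈ T, S.length ≤ L)
    {p : ℕ × ℕ} (hp : p ∈ insertPath T x r) : p.2 ≤ L := by
  induction T generalizing x r with
  | nil => simp_all [insertPath]
  | cons R rest ih =>
    have hRL : R.length ≤ L := hL R List.mem_cons_self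
    have hrest : ∀ S ∈ rest, S.length ≤ L := fun S hS => hL S (List.mem_cons_of_mem _ hS)
    rw [insertPath] at hp
    split_ifs at hp
    · simp_all
    all_goals
      rcases List.mem_cons.mp hp with rfl | hp
      · exact List.idxOf_le_length.trans hRL
      · exact ih hrest hp

end InsertPath

def PathLeftAbove (p q : List (ℕ × ℕ)) : Prop :=
  (∀ s c c', (s, c) ∈ p → (s, c') ∈ q → c' ≤ c) ∧
    (q.getLastD (0, 0)).2 ≤ (p.getLastD (0, 0)).2 ∧
    (p.getLastD (0, 0)).1 < (q.getLastD (0, 0)).1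

lemma getLastD_cons_of_ne_nil {α : Type*} {l : List α} (hl : l ≠ []) (a d : α) :
    (a :: l).getLastD d = l.getLastD d := by
  cases l with
  | nil => exact absurd rfl hl
  | cons b l => simp only [List.getLastD_cons]

section PathLeftAbove

variable {p q : List (ℕ × ℕ)} {r c c' : ℕ}

lemma PathLeftAbove.cons (h : PathLeftAbove p q) (hcc : c' ≤ c) (hp : p ≠ []) (hq : q ≠ [])
    (hpr : ∀ s ∈ p, r < s.1) (hqr : ∀ s ∈ q, r < s.1) :
    PathLeftAbove ((r, c) :: p) ((r, c') :: q) := by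
  obtain ⟨hcol, hlast₂, hlast₁⟩ := h
  refine ⟨fun s d d' hd hd' => ?_, ?_, ?_⟩
  · rcases List.mem_cons.mp hd with hd | hd <;> rcases List.mem_cons.mp hd' with hd' | hd'
    · simp_all
    · simpa [← (Prod.mk.inj hd).1] using hqr _ hd'
    · simpa [← (Prod.mk.inj hd').1] using hpr _ hd
    · exact hcol s d d' hd hd'
  all_goals rwa [getLastD_cons_of_ne_nil hp, getLastD_cons_of_ne_nil hq]

lemma pathLeftAbove_singleton_cons (hcc : c' ≤ c) (hq : q ≠ []) (hqr : ∀ s ∈ q, r < s.1)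
    (hqc : ∀ s ∈ q, s.2 ≤ c) : PathLeftAbove [(r, c)] ((r, c') :: q) := by
  have hlast : q.getLastD (0, 0) ∈ q := by
    rw [List.getLastD_eq_getLast?, List.getLast?_eq_some_getLast hq]
    exact List.getLast_mem hq
  refine ⟨fun s d d' hd hd' => ?_, ?_, ?_⟩
  · rw [List.mem_singleton, Prod.mk.injEq] at hd
    rcases List.mem_cons.mp hd' with hd' | hd'
    · simp_all
    · simpa [hd.1] using hqr _ hd'
  all_goals
    rw [getLastD_cons_of_ne_nil hq]
  · exact hqc _ hlast
  · exact hqr _ hlast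

end PathLeftAbove

section RowBumping

variable {R : List ℕ} {rest : List (List ℕ)} {a a' r : ℕ}

lemma pathLeftAbove_of_insertRow_snd_eq_none (hR : R.Pairwise (· < ·))
    (hrest : ∀ S ∈ rest, S.length ≤ R.length) (haa : a' ≤ a) (ha : (insertRow R a).2 = none) :
    PathLeftAbove [(r, insertCol R a)] (insertPath ((insertRow R a).1 :: rest) a' r) := by
  obtain ⟨y', hy'⟩ := exists_insertRow_insertRow_snd_eq_some (R := R) haa
  rw [insertPath_cons_of_some hy']
  refine pathLeftAbove_singleton_cons (insertCol_insertRow_fst_le hR haa)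
    (insertPath_ne_nil _ _ _) (fun s hs => le_fst_of_mem_insertPath hs) fun s hs => ?_
  rw [insertCol_of_insertRow_snd_eq_none ha]
  exact snd_le_of_mem_insertPath hrest hs

theorem pathLeftAbove_insertPath_insertTab (T : List (List ℕ))
    (hrows : ∀ R ∈ T, R.IsChain (· < ·)) (hlen : (T.map List.length).IsChain (fun a b => b ≤ a))
    (haa : a' ≤ a) :
    PathLeftAbove (insertPath T a r) (insertPath (insertTab T a) a' r) := by
  induction T generalizing a a' r with
  | nil =>
    change PathLeftAbove [(r, 0)] (insertPath [[a]] a' r)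
    have hempty : insertRow [] a = ([a], none) := if_pos (by simp)
    have := pathLeftAbove_of_insertRow_snd_eq_none (R := []) (rest := []) (r := r)
      List.Pairwise.nil (by simp) haa (congrArg Prod.snd hempty)
    simpa [hempty, insertCol] using this
  | cons R rest ih =>
    have hR : R.Pairwise (· < ·) := List.isChain_iff_pairwise.mp (hrows R List.mem_cons_self)
    have hlen' := List.isChain_iff_pairwise.mp hlen
    rw [List.map_cons, List.pairwise_cons] at hlen'
    cases ha : (insertRow R a).2 with
    | none =>
      rw [insertTab_cons_of_none ha, insertPath_cons_of_none ha]
      exact pathLeftAbove_of_insertRow_snd_eq_none hR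
        (fun S hS => hlen'.1 _ (List.mem_map_of_mem hS)) haa ha
    | some y =>
      obtain ⟨y', hy'⟩ := exists_insertRow_insertRow_snd_eq_some (R := R) haa
      rw [insertTab_cons_of_some ha, insertPath_cons_of_some ha, insertPath_cons_of_some hy']
      exact (ih (fun S hS => hrows S (List.mem_cons_of_mem _ hS))
          (List.isChain_iff_pairwise.mpr hlen'.2) (insertRow_insertRow_snd_le haa ha hy')).cons
        (insertCol_insertRow_fst_le hR haa) (insertPath_ne_nil _ _ _) (insertPath_ne_nil _ _ _)
        (fun s hs => le_fst_of_mem_insertPath hs) (fun s hs => le_fst_of_mem_insertPath hs)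

end RowBumping

theorem star_row_bumping_ge_general (P : List (List ℕ)) (x x' : ℕ)
    (hP : TransposeSSYT P)
    (hxx : x' ≤ x) :
    (∀ r c c', (r, c) ∈ insertPath P x 0 →
      (r, c') ∈ insertPath (insertTab P x) x' 0 → c' ≤ c) ∧
    (newBox (insertTab P x) x').2 ≤ (newBox P x).2 ∧
    (newBox P x).1 < (newBox (insertTab P x) x').1 := by
  obtain ⟨-, hlen, hrows, -⟩ := hP
  exact pathLeftAbove_insertPath_insertTab P hrows hlen hxx

/-- Row bumping lemma for `⋆`-insertion, weakly decreasing case: if `x ≥ x'` and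
`row(P)·x·x'` is fully-commutative, then the insertion path of
`(P ← x) ← x'` is weakly to the left of that of `P ← x`, and the new box added
by `x'` is weakly to the left of and strictly above the new box added by `x`
(rows are indexed bottom-to-top, so "strictly above" is `<` on row indices). -/
theorem star_row_bumping_ge (P : List (List ℕ)) (x x' : ℕ)
    (hP : TransposeSSYT P)
    (hfc : FullyCommutative (rowWord P))
    (hfc2 : FullyCommutative (rowWord P ++ [x, x']))
    (hxx : x' ≤ x) :
    (∀ r c c', (r, c) ∈ insertPath P x 0 →
      (r, c') ∈ insertPath (insertTab P x) x' 0 → c' ≤ c) ∧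
    (newBox (insertTab P x) x').2 ≤ (newBox P x).2 ∧
    (newBox P x).1 < (newBox (insertTab P x) x').1 :=
  star_row_bumping_ge_general P x x' hP hxx
end
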